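/- arXiv:2311.05172 — 3 statements merged into one kernel-verified Lean document; each statement's English description precedes it below -/
import Mathlib

section
/- With notation as in the context: the images of φ_V(x⁴) and φ_V(y⁴) in the localization of R_V at the class of s are equal; the images of φ_W(y⁴) and φ_W(z⁴) in the localization of R_W at the class of q are equal; and the images of φ_U(z⁴) and φ_U(x⁴) in the localization of R_U at the class of v are equal. Consequently the locally defined element given by x⁴ on the chart U, y⁴ on the chart V, and z⁴ on the chart W is a well-defined global function on the logarithmic blowup. -/
noncomputable section

open MvPolynomial

/-- The polynomial ring `ℤ[x,y,z]` (also used, with variables renamed, for the three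
blowup charts `ℤ[x,u,v]`, `ℤ[y,s,w]`, `ℤ[z,p,q]`). -/
abbrev P3 : Type := MvPolynomial (Fin 3) ℤ

/-- The first generator `x³z − xy²z` of the ideal `I ⊆ ℤ[x,y,z]`. -/
def g1 : P3 := X 0 ^ 3 * X 2 - X 0 * X 1 ^ 2 * X 2

/-- The second generator `xy³ − xyz²` of the ideal `I ⊆ ℤ[x,y,z]`. -/
def g2 : P3 := X 0 * X 1 ^ 3 - X 0 * X 1 * X 2 ^ 2

/-- The third generator `yz³ − x²yz` of the ideal `I ⊆ ℤ[x,y,z]`. -/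
def g3 : P3 := X 1 * X 2 ^ 3 - X 0 ^ 2 * X 1 * X 2

/-- The chart map `φ_U : ℤ[x,y,z] → ℤ[x,u,v]`, `x ↦ x`, `y ↦ x·u`, `z ↦ x·v`
(in the target, `x = X 0`, `u = X 1`, `v = X 2`). -/
def phiU : P3 →+* P3 := (aeval ![X 0, X 0 * X 1, X 0 * X 2]).toRingHom

/-- The chart map `φ_V : ℤ[x,y,z] → ℤ[y,s,w]`, `x ↦ y·s`, `y ↦ y`, `z ↦ y·w`
(in the target, `y = X 0`, `s = X 1`, `w = X 2`). -/
def phiV : P3 →+* P3 := (aeval ![X 0 * X 1, X 0, X 0 * X 2]).toRingHom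

/-- The chart map `φ_W : ℤ[x,y,z] → ℤ[z,p,q]`, `x ↦ z·p`, `y ↦ z·q`, `z ↦ z`
(in the target, `z = X 0`, `p = X 1`, `q = X 2`). -/
def phiW : P3 →+* P3 := (aeval ![X 0 * X 1, X 0 * X 2, X 0]).toRingHom

/-- The ideal `I_U = (x⁴v(1−u²), x⁴u(u²−v²), x⁴uv(v²−1))` of `ℤ[x,u,v]`, generated by the
`φ_U`-images of the generators of `I`, so that `R_U = ℤ[x,u,v]/I_U`. -/
def IU : Ideal P3 := Ideal.span {phiU g1, phiU g2, phiU g3}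

/-- The ideal `I_V = (y⁴sw(s²−1), y⁴s(1−w²), y⁴w(w²−s²))` of `ℤ[y,s,w]`, generated by the
`φ_V`-images of the generators of `I`, so that `R_V = ℤ[y,s,w]/I_V`. -/
def IV : Ideal P3 := Ideal.span {phiV g1, phiV g2, phiV g3}

/-- The ideal `I_W = (z⁴p(p²−q²), z⁴pq(q²−1), z⁴q(1−p²))` of `ℤ[z,p,q]`, generated by the
`φ_W`-images of the generators of `I`, so that `R_W = ℤ[z,p,q]/I_W`. -/
def IW : Ideal P3 := Ideal.span {phiW g1, phiW g2, phiW g3}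

/-- The class of `s` in `R_V = ℤ[y,s,w]/I_V`. -/
def sV : P3 ⧸ IV := Ideal.Quotient.mk IV (X 1)

/-- The class of `q` in `R_W = ℤ[z,p,q]/I_W`. -/
def qW : P3 ⧸ IW := Ideal.Quotient.mk IW (X 2)

/-- The class of `v` in `R_U = ℤ[x,u,v]/I_U`. -/
def vU : P3 ⧸ IU := Ideal.Quotient.mk IU (X 2)


lemma mem_span3_left {a b c : P3} (p q : P3) : p * a + q * b ∈ Ideal.span {a, b, c} := by
  apply Ideal.add_mem
  · exact Ideal.mul_mem_left _ _ (Ideal.subset_span (by simp))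
  · exact Ideal.mul_mem_left _ _ (Ideal.subset_span (by simp))

lemma mem_span3_right {a b c : P3} (p q : P3) : p * b + q * c ∈ Ideal.span {a, b, c} := by
  apply Ideal.add_mem
  · exact Ideal.mul_mem_left _ _ (Ideal.subset_span (by simp))
  · exact Ideal.mul_mem_left _ _ (Ideal.subset_span (by simp))

set_option synthInstance.maxHeartbeats 200000 in
set_option maxHeartbeats 1000000 in
lemma loc_eq (I : Ideal P3) (t a b : P3) (h : t * (a - b) ∈ I) :
    algebraMap (P3 ⧸ I) (Localization.Away (Ideal.Quotient.mk I t)) (Ideal.Quotient.mk I a) =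
      algebraMap (P3 ⧸ I) (Localization.Away (Ideal.Quotient.mk I t))
        (Ideal.Quotient.mk I b) := by
  set T := Ideal.Quotient.mk I t with hT
  have hu : IsUnit (algebraMap (P3 ⧸ I) (Localization.Away T) T) :=
    IsLocalization.map_units (M := Submonoid.powers T) (Localization.Away T)
      ⟨T, Submonoid.mem_powers T⟩
  have h0 : T * Ideal.Quotient.mk I a = T * Ideal.Quotient.mk I b := by
    rw [hT, ← map_mul, ← map_mul]
    rw [Ideal.Quotient.eq]
    have : t * a - t * b = t * (a - b) := by ring
    rw [this]
    exact h
  have h1 := congrArg (algebraMap (P3 ⧸ I) (Localization.Away T)) h0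
  rw [map_mul, map_mul] at h1
  exact hu.mul_left_cancel h1

/-- The images of `φ_V(x⁴)` and `φ_V(y⁴)` in the localization of `R_V` at the class of `s`
agree; the images of `φ_W(y⁴)` and `φ_W(z⁴)` in the localization of `R_W` at the class of `q`
agree; and the images of `φ_U(z⁴)` and `φ_U(x⁴)` in the localization of `R_U` at the class of
`v` agree.  (Consequently `x⁴` on `U`, `y⁴` on `V`, `z⁴` on `W` glue to a global function on
the logarithmic blowup.) -/
theorem glueing_of_fourth_powers :
    (algebraMap (P3 ⧸ IV) (Localization.Away sV) (Ideal.Quotient.mk IV (phiV (X 0 ^ 4))) =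
      algebraMap (P3 ⧸ IV) (Localization.Away sV) (Ideal.Quotient.mk IV (phiV (X 1 ^ 4)))) ∧
    (algebraMap (P3 ⧸ IW) (Localization.Away qW) (Ideal.Quotient.mk IW (phiW (X 1 ^ 4))) =
      algebraMap (P3 ⧸ IW) (Localization.Away qW) (Ideal.Quotient.mk IW (phiW (X 2 ^ 4)))) ∧
    (algebraMap (P3 ⧸ IU) (Localization.Away vU) (Ideal.Quotient.mk IU (phiU (X 2 ^ 4))) =
      algebraMap (P3 ⧸ IU) (Localization.Away vU) (Ideal.Quotient.mk IU (phiU (X 0 ^ 4)))) := by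
  refine ⟨loc_eq IV (X 1) _ _ ?_, loc_eq IW (X 2) _ _ ?_, loc_eq IU (X 2) _ _ ?_⟩
  · have key : (X 1 : P3) * (phiV (X 0 ^ 4) - phiV (X 1 ^ 4)) =
        ((X 1 ^ 2 + 1) * X 2) * phiV g1 + ((X 1 ^ 2 + 1) * (X 1 ^ 2 - 1)) * phiV g2 := by
      simp only [phiV, g1, g2, AlgHom.toRingHom_eq_coe, AlgHom.coe_toRingHom, RingHom.coe_coe,
        map_sub, map_mul, map_pow, aeval_X, Matrix.cons_val_zero, Matrix.cons_val_one,
        Matrix.head_cons, Matrix.cons_val_two, Matrix.tail_cons]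
      ring
    rw [key]
    exact mem_span3_left _ _
  · have key : (X 2 : P3) * (phiW (X 1 ^ 4) - phiW (X 2 ^ 4)) =
        ((X 2 ^ 2 + 1) * X 1) * phiW g2 + ((X 2 ^ 2 + 1) * (X 2 ^ 2 - 1)) * phiW g3 := by
      simp only [phiW, g2, g3, AlgHom.toRingHom_eq_coe, AlgHom.coe_toRingHom, RingHom.coe_coe,
        map_sub, map_mul, map_pow, aeval_X, Matrix.cons_val_zero, Matrix.cons_val_one,
        Matrix.head_cons, Matrix.cons_val_two, Matrix.tail_cons]
      ring
    rw [key]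
    exact mem_span3_right _ _
  · have key : (X 2 : P3) * (phiU (X 2 ^ 4) - phiU (X 0 ^ 4)) =
        ((X 2 ^ 2 + 1) * (X 2 ^ 2 - 1)) * phiU g1 + ((X 2 ^ 2 + 1) * X 1) * phiU g3 := by
      simp only [phiU, g1, g3, AlgHom.toRingHom_eq_coe, AlgHom.coe_toRingHom, RingHom.coe_coe,
        map_sub, map_mul, map_pow, aeval_X, Matrix.cons_val_zero, Matrix.cons_val_one,
        Matrix.head_cons, Matrix.cons_val_two, Matrix.tail_cons]
      ring
    rw [key]
    have h1 : phiU g1 ∈ IU := Ideal.subset_span (by simp)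
    have h3 : phiU g3 ∈ IU := Ideal.subset_span (by simp)
    exact Ideal.add_mem _ (Ideal.mul_mem_left _ _ h1) (Ideal.mul_mem_left _ _ h3)

end
end

section
/- With notation as in the context: there is no polynomial g ∈ ℤ[x,y,z] such that simultaneously φ_U(g) ≡ x⁴ modulo I_U, φ_V(g) ≡ y⁴ modulo I_V, and φ_W(g) ≡ z⁴ modulo I_W. In other words, the global section of the structure sheaf of the logarithmic blowup given by x⁴, y⁴, z⁴ on the three charts is not in the image of Γ(X, 𝒪_X), so 𝒪_X → τ⋆𝒪_Y is not surjective for this logarithmic modification τ : Y → X. -/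
noncomputable section

open MvPolynomial

/-!
Only the degree-4 part `h` of `g` matters. It is read off by substituting multiples of a scaling
variable `t = X 0` and taking the coefficient of `t ^ 4`; e.g. `aeval ![X 0, X 0 * C ε, X 0 * C δ] g`
is `g (t, ε t, δ t)`. In degree four the chart `U` is `ℤ[u, v]/(v(1-u²), u(u²-v²), uv(v²-1))`,
supported at the four reduced points `(±1, ±1)`, which force `h (1, ±1, ±1) = 1`, and at the
origin, with local ring `ℤ[u]/(u³)`. The origins of the three charts force the coefficients of
`x⁴, y⁴, z⁴` in `h` to be `1` and those of `x²y², y²z², z²x²` to be `0`. Summing `h` over the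
points `(1, ±1, ±1)` kills every monomial with an odd exponent and leaves `4` times the sum of
those six coefficients, so `4 = 12`.
-/

theorem Ideal.map_sub_mem_of_quotient_mk_eq {A B F : Type*} [CommRing A] [CommRing B]
    [FunLike F A B] [RingHomClass F A B] (f : F) {I : Ideal A} {J : Ideal B}
    (hIJ : I ≤ J.comap f) {a b : A} (h : Ideal.Quotient.mk I a = Ideal.Quotient.mk I b) :
    f a - f b ∈ J := by
  rw [← map_sub]
  exact hIJ (Ideal.Quotient.eq.mp h)

theorem MvPolynomial.coeff_eq_of_sub_mem_span_X_pow {σ R : Type*} [CommRing R]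
    {i : σ} {n : ℕ} {p q : MvPolynomial σ R} (h : p - q ∈ Ideal.span {X i ^ n})
    {m : σ →₀ ℕ} (hm : m i < n) : coeff m p = coeff m q := by
  classical
  obtain ⟨r, hr⟩ := Ideal.mem_span_singleton.mp h
  rw [← sub_eq_zero, ← coeff_sub, hr, X_pow_eq_monomial, coeff_monomial_mul', if_neg]
  exact fun hle => hm.not_ge (by simpa using hle i)

def expVec (a b c : ℕ) : Fin 3 →₀ ℕ :=
  Finsupp.single 0 a + Finsupp.single 1 b + Finsupp.single 2 c

theorem eq_expVec (e : Fin 3 →₀ ℕ) : e = expVec (e 0) (e 1) (e 2) := by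
  ext i; fin_cases i <;> simp [expVec]

theorem expVec_inj {a b c a' b' c' : ℕ} :
    expVec a b c = expVec a' b' c' ↔ a = a' ∧ b = b' ∧ c = c' := by
  refine ⟨fun h => ?_, by rintro ⟨rfl, rfl, rfl⟩; rfl⟩
  have h0 := DFunLike.congr_fun h 0
  have h1 := DFunLike.congr_fun h 1
  have h2 := DFunLike.congr_fun h 2
  simp [expVec] at h0 h1 h2
  exact ⟨h0, h1, h2⟩

theorem monomial_expVec (a b c : ℕ) (r : ℤ) :
    monomial (expVec a b c) r = C r * X 0 ^ a * X 1 ^ b * X 2 ^ c := by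
  rw [expVec, C_mul_X_pow_eq_monomial, X_pow_eq_monomial, X_pow_eq_monomial,
    monomial_mul, monomial_mul, mul_one, mul_one]

theorem aeval_monomial_expVec (v : Fin 3 → P3) (a b c : ℕ) (r : ℤ) :
    aeval v (monomial (expVec a b c) r) = C r * v 0 ^ a * v 1 ^ b * v 2 ^ c := by
  simp [monomial_expVec]

theorem aeval_phiU (v : Fin 3 → P3) (g : P3) :
    aeval v (phiU g) = aeval ![v 0, v 0 * v 1, v 0 * v 2] g := by
  change aeval v (aeval _ g) = _
  rw [comp_aeval_apply]
  congr; funext i; fin_cases i <;> simp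

theorem aeval_phiV (v : Fin 3 → P3) (g : P3) :
    aeval v (phiV g) = aeval ![v 0 * v 1, v 0, v 0 * v 2] g := by
  change aeval v (aeval _ g) = _
  rw [comp_aeval_apply]
  congr; funext i; fin_cases i <;> simp

theorem aeval_phiW (v : Fin 3 → P3) (g : P3) :
    aeval v (phiW g) = aeval ![v 0 * v 1, v 0 * v 2, v 0] g := by
  change aeval v (aeval _ g) = _
  rw [comp_aeval_apply]
  congr; funext i; fin_cases i <;> simp

theorem IU_le_comap_aeval {J : Ideal P3} {v : Fin 3 → P3}
    (h₁ : v 0 ^ 4 * v 2 * (1 - v 1 ^ 2) ∈ J) (h₂ : v 0 ^ 4 * v 1 * (v 1 ^ 2 - v 2 ^ 2) ∈ J)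
    (h₃ : v 0 ^ 4 * v 1 * v 2 * (v 2 ^ 2 - 1) ∈ J) : IU ≤ J.comap (aeval v) := by
  rw [IU, Ideal.span_le]
  rintro _ (rfl | rfl | rfl) <;>
    simp only [SetLike.mem_coe, Ideal.mem_comap, aeval_phiU, g1, g2, g3, map_sub, map_mul,
      map_pow, aeval_X, Matrix.cons_val]
  · convert h₁ using 1; ring
  · convert h₂ using 1; ring
  · convert h₃ using 1; ring

theorem IV_le_comap_aeval {J : Ideal P3} {v : Fin 3 → P3}
    (h₁ : v 0 ^ 4 * v 1 * v 2 * (v 1 ^ 2 - 1) ∈ J) (h₂ : v 0 ^ 4 * v 1 * (1 - v 2 ^ 2) ∈ J)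
    (h₃ : v 0 ^ 4 * v 2 * (v 2 ^ 2 - v 1 ^ 2) ∈ J) : IV ≤ J.comap (aeval v) := by
  rw [IV, Ideal.span_le]
  rintro _ (rfl | rfl | rfl) <;>
    simp only [SetLike.mem_coe, Ideal.mem_comap, aeval_phiV, g1, g2, g3, map_sub, map_mul,
      map_pow, aeval_X, Matrix.cons_val]
  · convert h₁ using 1; ring
  · convert h₂ using 1; ring
  · convert h₃ using 1; ring

theorem IW_le_comap_aeval {J : Ideal P3} {v : Fin 3 → P3}
    (h₁ : v 0 ^ 4 * v 1 * (v 1 ^ 2 - v 2 ^ 2) ∈ J) (h₂ : v 0 ^ 4 * v 1 * v 2 * (v 2 ^ 2 - 1) ∈ J)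
    (h₃ : v 0 ^ 4 * v 2 * (1 - v 1 ^ 2) ∈ J) : IW ≤ J.comap (aeval v) := by
  rw [IW, Ideal.span_le]
  rintro _ (rfl | rfl | rfl) <;>
    simp only [SetLike.mem_coe, Ideal.mem_comap, aeval_phiW, g1, g2, g3, map_sub, map_mul,
      map_pow, aeval_X, Matrix.cons_val]
  · convert h₁ using 1; ring
  · convert h₂ using 1; ring
  · convert h₃ using 1; ring

theorem coeff_aeval_axisX (g : P3) (a b : ℕ) :
    coeff (expVec (a + b) b 0) (aeval ![X 0, X 0 * X 1, 0] g) = coeff (expVec a b 0) g := by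
  induction g using MvPolynomial.induction_on' with
  | add p q hp hq => rw [map_add, coeff_add, coeff_add, hp, hq]
  | monomial e r =>
    obtain ⟨i, j, k, rfl⟩ : ∃ i j k, e = expVec i j k := ⟨_, _, _, eq_expVec e⟩
    have : aeval ![X 0, X 0 * X 1, 0] (monomial (expVec i j k) r) =
        monomial (expVec (i + j) j 0) (r * 0 ^ k) := by
      rw [aeval_monomial_expVec, monomial_expVec]
      simp only [Matrix.cons_val, map_mul, map_pow, map_zero]; ring
    simp only [this, coeff_monomial, expVec_inj, and_true]
    rcases k.eq_zero_or_pos with rfl | hk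
    · simp only [pow_zero, mul_one]
      split_ifs <;> grind
    · simp only [zero_pow hk.ne', mul_zero]
      split_ifs <;> grind

theorem coeff_aeval_axisY (g : P3) (b c : ℕ) :
    coeff (expVec (b + c) c 0) (aeval ![0, X 0, X 0 * X 1] g) = coeff (expVec 0 b c) g := by
  induction g using MvPolynomial.induction_on' with
  | add p q hp hq => rw [map_add, coeff_add, coeff_add, hp, hq]
  | monomial e r =>
    obtain ⟨i, j, k, rfl⟩ : ∃ i j k, e = expVec i j k := ⟨_, _, _, eq_expVec e⟩
    have : aeval ![0, X 0, X 0 * X 1] (monomial (expVec i j k) r) =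
        monomial (expVec (j + k) k 0) (r * 0 ^ i) := by
      rw [aeval_monomial_expVec, monomial_expVec]
      simp only [Matrix.cons_val, map_mul, map_pow, map_zero]; ring
    simp only [this, coeff_monomial, expVec_inj, and_true]
    rcases i.eq_zero_or_pos with rfl | hi
    · simp only [pow_zero, mul_one]
      split_ifs <;> grind
    · simp only [zero_pow hi.ne', mul_zero]
      split_ifs <;> grind

theorem coeff_aeval_axisZ (g : P3) (c a : ℕ) :
    coeff (expVec (c + a) a 0) (aeval ![X 0 * X 1, 0, X 0] g) = coeff (expVec a 0 c) g := by
  induction g using MvPolynomial.induction_on' with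
  | add p q hp hq => rw [map_add, coeff_add, coeff_add, hp, hq]
  | monomial e r =>
    obtain ⟨i, j, k, rfl⟩ : ∃ i j k, e = expVec i j k := ⟨_, _, _, eq_expVec e⟩
    have : aeval ![X 0 * X 1, 0, X 0] (monomial (expVec i j k) r) =
        monomial (expVec (k + i) i 0) (r * 0 ^ j) := by
      rw [aeval_monomial_expVec, monomial_expVec]
      simp only [Matrix.cons_val, map_mul, map_pow, map_zero]; ring
    simp only [this, coeff_monomial, expVec_inj, and_true]
    rcases j.eq_zero_or_pos with rfl | hj
    · simp only [pow_zero, mul_one]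
      split_ifs <;> grind
    · simp only [zero_pow hj.ne', mul_zero]
      split_ifs <;> grind

theorem sum_coeff_aeval_diagonal (g : P3) :
    ∑ ε ∈ ({1, -1} : Finset ℤ), ∑ δ ∈ ({1, -1} : Finset ℤ),
        coeff (expVec 4 0 0) (aeval ![X 0, X 0 * C ε, X 0 * C δ] g) =
      4 * (coeff (expVec 4 0 0) g + coeff (expVec 0 4 0) g + coeff (expVec 0 0 4) g +
        coeff (expVec 2 2 0) g + coeff (expVec 0 2 2) g + coeff (expVec 2 0 2) g) := by
  induction g using MvPolynomial.induction_on' with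
  | add p q hp hq =>
    simp only [map_add, coeff_add, Finset.sum_add_distrib, hp, hq]; ring
  | monomial e r =>
    obtain ⟨i, j, k, rfl⟩ : ∃ i j k, e = expVec i j k := ⟨_, _, _, eq_expVec e⟩
    have (ε δ : ℤ) : aeval ![X 0, X 0 * C ε, X 0 * C δ] (monomial (expVec i j k) r) =
        monomial (expVec (i + j + k) 0 0) (r * ε ^ j * δ ^ k) := by
      rw [aeval_monomial_expVec, monomial_expVec]
      simp only [Matrix.cons_val, map_mul, map_pow]; ring
    have hne : (1 : ℤ) ≠ -1 := by norm_num
    simp only [this, coeff_monomial, expVec_inj, Finset.sum_pair hne]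
    by_cases hdeg : i + j + k = 4
    · obtain rfl : i = 4 - j - k := by omega
      have hj : j ≤ 4 := by omega
      have hk : k ≤ 4 := by omega
      interval_cases j <;> interval_cases k <;> simp <;> ring
    · simp (disch := omega) only [if_neg]
      ring

section Charts

variable {g : P3}

theorem coeff_X_pow_four (m : Fin 3 →₀ ℕ) :
    coeff m (X 0 ^ 4 : P3) = if expVec 4 0 0 = m then 1 else 0 := by
  rw [← coeff_monomial, monomial_expVec]; simp

theorem coeff_aeval_diagonal_of_chartU
    (hU : Ideal.Quotient.mk IU (phiU g) = Ideal.Quotient.mk IU (X 0 ^ 4))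
    {ε δ : ℤ} (hε : ε ∈ ({1, -1} : Finset ℤ)) (hδ : δ ∈ ({1, -1} : Finset ℤ)) :
    coeff (expVec 4 0 0) (aeval ![X 0, X 0 * C ε, X 0 * C δ] g) = 1 := by
  have hsq {a : ℤ} (ha : a ∈ ({1, -1} : Finset ℤ)) : (C a : P3) ^ 2 = 1 := by
    rcases Finset.mem_insert.mp ha with rfl | ha <;> simp_all
  have hI : IU ≤ (⊥ : Ideal P3).comap (aeval ![X 0, C ε, C δ]) :=
    IU_le_comap_aeval
      (by simp only [Matrix.cons_val, hsq hε, sub_self, mul_zero, Submodule.zero_mem])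
      (by simp only [Matrix.cons_val, hsq hε, hsq hδ, sub_self, mul_zero, Submodule.zero_mem])
      (by simp only [Matrix.cons_val, hsq hδ, sub_self, mul_zero, Submodule.zero_mem])
  have h := Ideal.map_sub_mem_of_quotient_mk_eq _ hI hU
  simp only [Ideal.mem_bot, sub_eq_zero, aeval_phiU, Matrix.cons_val, map_pow, aeval_X] at h
  rw [h, coeff_X_pow_four, if_pos rfl]

theorem coeff_of_sub_X_pow_four_mem {p : P3} (h : p - X 0 ^ 4 ∈ Ideal.span {X 1 ^ 3}) :
    coeff (expVec 4 0 0) p = 1 ∧ coeff (expVec 4 2 0) p = 0 := by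
  constructor
  · rw [coeff_eq_of_sub_mem_span_X_pow h (by simp [expVec]), coeff_X_pow_four, if_pos rfl]
  · rw [coeff_eq_of_sub_mem_span_X_pow h (by simp [expVec]), coeff_X_pow_four, if_neg]
    simp [expVec_inj]

theorem coeff_of_chartU
    (hU : Ideal.Quotient.mk IU (phiU g) = Ideal.Quotient.mk IU (X 0 ^ 4)) :
    coeff (expVec 4 0 0) g = 1 ∧ coeff (expVec 2 2 0) g = 0 := by
  have hI : IU ≤ (Ideal.span {(X 1 : P3) ^ 3}).comap (aeval ![X 0, X 1, 0]) :=
    IU_le_comap_aeval (by simp only [Matrix.cons_val, mul_zero, zero_mul, Submodule.zero_mem])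
      (by simp only [Matrix.cons_val]; exact Ideal.mem_span_singleton'.mpr ⟨X 0 ^ 4, by ring⟩)
      (by simp only [Matrix.cons_val, mul_zero, zero_mul, Submodule.zero_mem])
  have h := Ideal.map_sub_mem_of_quotient_mk_eq _ hI hU
  simp only [aeval_phiU, map_pow, aeval_X, Matrix.cons_val, mul_zero] at h
  rw [← coeff_aeval_axisX g 4 0, ← coeff_aeval_axisX g 2 2]
  exact coeff_of_sub_X_pow_four_mem h

theorem coeff_of_chartV
    (hV : Ideal.Quotient.mk IV (phiV g) = Ideal.Quotient.mk IV (X 0 ^ 4)) :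
    coeff (expVec 0 4 0) g = 1 ∧ coeff (expVec 0 2 2) g = 0 := by
  have hI : IV ≤ (Ideal.span {(X 1 : P3) ^ 3}).comap (aeval ![X 0, 0, X 1]) :=
    IV_le_comap_aeval (by simp only [Matrix.cons_val, mul_zero, zero_mul, Submodule.zero_mem])
      (by simp only [Matrix.cons_val, mul_zero, zero_mul, Submodule.zero_mem])
      (by simp only [Matrix.cons_val]; exact Ideal.mem_span_singleton'.mpr ⟨X 0 ^ 4, by ring⟩)
  have h := Ideal.map_sub_mem_of_quotient_mk_eq _ hI hV
  simp only [aeval_phiV, map_pow, aeval_X, Matrix.cons_val, mul_zero] at h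
  rw [← coeff_aeval_axisY g 4 0, ← coeff_aeval_axisY g 2 2]
  exact coeff_of_sub_X_pow_four_mem h

theorem coeff_of_chartW
    (hW : Ideal.Quotient.mk IW (phiW g) = Ideal.Quotient.mk IW (X 0 ^ 4)) :
    coeff (expVec 0 0 4) g = 1 ∧ coeff (expVec 2 0 2) g = 0 := by
  have hI : IW ≤ (Ideal.span {(X 1 : P3) ^ 3}).comap (aeval ![X 0, X 1, 0]) :=
    IW_le_comap_aeval
      (by simp only [Matrix.cons_val]; exact Ideal.mem_span_singleton'.mpr ⟨X 0 ^ 4, by ring⟩)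
      (by simp only [Matrix.cons_val, mul_zero, zero_mul, Submodule.zero_mem])
      (by simp only [Matrix.cons_val, mul_zero, zero_mul, Submodule.zero_mem])
  have h := Ideal.map_sub_mem_of_quotient_mk_eq _ hI hW
  simp only [aeval_phiW, map_pow, aeval_X, Matrix.cons_val, mul_zero] at h
  rw [← coeff_aeval_axisZ g 4 0, ← coeff_aeval_axisZ g 2 2]
  exact coeff_of_sub_X_pow_four_mem h

end Charts

/-- There is no polynomial `g ∈ ℤ[x,y,z]` such that simultaneously `φ_U(g) ≡ x⁴ mod I_U`,
`φ_V(g) ≡ y⁴ mod I_V`, and `φ_W(g) ≡ z⁴ mod I_W`: the global section of the structure sheaf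
of the logarithmic blowup given by `x⁴`, `y⁴`, `z⁴` on the three charts is not in the image
of `Γ(X, 𝒪_X)`, so `𝒪_X → τ⋆𝒪_Y` is not surjective.  (In each chart the relevant fourth
power is that of the first variable, `X 0`.) -/
theorem no_global_preimage :
    ¬ ∃ g : P3,
      Ideal.Quotient.mk IU (phiU g) = Ideal.Quotient.mk IU (X 0 ^ 4) ∧
      Ideal.Quotient.mk IV (phiV g) = Ideal.Quotient.mk IV (X 0 ^ 4) ∧
      Ideal.Quotient.mk IW (phiW g) = Ideal.Quotient.mk IW (X 0 ^ 4) := by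
  rintro ⟨g, hU, hV, hW⟩
  obtain ⟨hx4, hx2y2⟩ := coeff_of_chartU hU
  obtain ⟨hy4, hy2z2⟩ := coeff_of_chartV hV
  obtain ⟨hz4, hz2x2⟩ := coeff_of_chartW hW
  have h := sum_coeff_aeval_diagonal g
  rw [Finset.sum_congr rfl fun ε hε => Finset.sum_congr rfl fun δ hδ =>
    coeff_aeval_diagonal_of_chartU hU hε hδ] at h
  rw [hx4, hy4, hz4, hx2y2, hy2z2, hz2x2] at h
  norm_num at h

end
end

section
/- With notation as in the context: in the ring R_U, the images under φ_U of the four monomials y⁴, x²z², y²z², z⁴ all coincide; moreover, the ℤ-submodule of R_U generated by the images of the six total-degree-4 monomials with all exponents even (x⁴, x²y², x²z², y⁴, y²z², z⁴) is a free ℤ-module of rank 3 with basis the images of x⁴, x²y², x²z². -/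
noncomputable section

open MvPolynomial

/-! In `R_U` the six monomials become `x⁴·m` with `m ∈ {1, u², v², u⁴, u²v², v⁴}`. The generators
`x⁴v(1 − u²)` and `x⁴u(u² − v²)` of `I_U` identify `x⁴u⁴`, `x⁴v²`, `x⁴u²v²` and `x⁴v⁴`. For
independence of `x⁴`, `x⁴u²`, `x⁴v²`, test a relation `a·x⁴ + b·x⁴u² + c·x⁴v² ∈ I_U` at two
points of `Spec R_U`: at the `ℤ[t]/(t³)`-point `(1, t, 0)` it reads `a + b t² = 0`, and at
`(1, 1, 1)` it reads `a + b + c = 0`. -/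

lemma Polynomial.eq_zero_and_eq_zero_of_X_pow_three_dvd {R : Type*} [CommRing R] {a b : R}
    (h : Polynomial.X ^ 3 ∣ Polynomial.C a + Polynomial.C b * Polynomial.X ^ 2) :
    a = 0 ∧ b = 0 := by
  rw [Polynomial.X_pow_dvd_iff] at h
  have h0 := h 0 (by norm_num)
  have h2 := h 2 (by norm_num)
  simp only [Polynomial.coeff_add, Polynomial.coeff_C, Polynomial.coeff_C_mul_X_pow] at h0 h2
  simpa using And.intro h0 h2

lemma IU_le_comap {S F : Type*} [CommRing S] [FunLike F P3 S] [RingHomClass F P3 S] (f : F)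
    (J : Ideal S) (h1 : f (phiU g1) ∈ J) (h2 : f (phiU g2) ∈ J)
    (h3 : f (phiU g3) ∈ J) : IU ≤ J.comap f := by
  simp only [IU, Ideal.span_le, Set.insert_subset_iff, Set.singleton_subset_iff]
  exact ⟨h1, h2, h3⟩

@[simp]
lemma phiU_X (i : Fin 3) : phiU (X i) = ![X 0, X 0 * X 1, X 0 * X 2] i := by
  simp [phiU]

lemma mk_phiU_g1 : Ideal.Quotient.mk IU (phiU g1) = 0 :=
  Ideal.Quotient.eq_zero_iff_mem.2 (Ideal.subset_span (by simp))

lemma mk_phiU_g2 : Ideal.Quotient.mk IU (phiU g2) = 0 :=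
  Ideal.Quotient.eq_zero_iff_mem.2 (Ideal.subset_span (by simp))

lemma mk_phiU_y4_eq_x2z2 :
    Ideal.Quotient.mk IU (phiU (X 1 ^ 4)) = Ideal.Quotient.mk IU (phiU (X 0 ^ 2 * X 2 ^ 2)) := by
  have h1 := mk_phiU_g1
  have h2 := mk_phiU_g2
  simp only [g1, g2, map_sub, map_mul, map_pow, phiU_X, Matrix.cons_val] at h1 h2 ⊢
  linear_combination Ideal.Quotient.mk IU (X 1) * h2 - Ideal.Quotient.mk IU (X 2) * h1

lemma mk_phiU_x2z2_eq_y2z2 :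
    Ideal.Quotient.mk IU (phiU (X 0 ^ 2 * X 2 ^ 2)) =
      Ideal.Quotient.mk IU (phiU (X 1 ^ 2 * X 2 ^ 2)) := by
  have h1 := mk_phiU_g1
  simp only [g1, map_sub, map_mul, map_pow, phiU_X, Matrix.cons_val] at h1 ⊢
  linear_combination Ideal.Quotient.mk IU (X 2) * h1

lemma mk_phiU_y2z2_eq_z4 :
    Ideal.Quotient.mk IU (phiU (X 1 ^ 2 * X 2 ^ 2)) = Ideal.Quotient.mk IU (phiU (X 2 ^ 4)) := by
  have h1 := mk_phiU_g1
  have h2 := mk_phiU_g2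
  simp only [g1, g2, map_sub, map_mul, map_pow, phiU_X, Matrix.cons_val] at h1 h2 ⊢
  set u := Ideal.Quotient.mk IU (X 1)
  set v := Ideal.Quotient.mk IU (X 2)
  linear_combination (u ^ 2 * v - v ^ 3) * h1 + u * v ^ 2 * h2

lemma linearIndependent_mk_phiU_x4_x2y2_x2z2 :
    LinearIndependent ℤ
      ![Ideal.Quotient.mk IU (phiU (X 0 ^ 4)),
        Ideal.Quotient.mk IU (phiU (X 0 ^ 2 * X 1 ^ 2)),
        Ideal.Quotient.mk IU (phiU (X 0 ^ 2 * X 2 ^ 2))] := by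
  rw [Fintype.linearIndependent_iff]
  intro c hc
  have hmem : c 0 • phiU (X 0 ^ 4) + c 1 • phiU (X 0 ^ 2 * X 1 ^ 2)
      + c 2 • phiU (X 0 ^ 2 * X 2 ^ 2) ∈ IU := by
    rw [← Ideal.Quotient.eq_zero_iff_mem]
    simpa [Fin.sum_univ_three] using hc
  have hdvd : Polynomial.X ^ 3 ∣ Polynomial.C (c 0) + Polynomial.C (c 1) * Polynomial.X ^ 2 := by
    simpa [Ideal.mem_span_singleton] using IU_le_comap
      (aeval ![1, Polynomial.X, 0] : P3 →ₐ[ℤ] Polynomial ℤ) (Ideal.span {Polynomial.X ^ 3})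
      (by simp [g1]) (by simp [g2]) (by simp [g3]) hmem
  have hsum : c 0 + c 1 + c 2 = 0 := by
    simpa using IU_le_comap (eval 1) ⊥ (by simp [g1]) (by simp [g2]) (by simp [g3]) hmem
  obtain ⟨h0, h1⟩ := Polynomial.eq_zero_and_eq_zero_of_X_pow_three_dvd hdvd
  have h2 : c 2 = 0 := by linear_combination hsum - h0 - h1
  intro i
  fin_cases i
  exacts [h0, h1, h2]

/-- In `R_U = ℤ[x,u,v]/I_U`, the images under `φ_U` of the four monomials `y⁴`, `x²z²`,
`y²z²`, `z⁴` all coincide; moreover the `ℤ`-submodule of `R_U` generated by the images of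
the six total-degree-4 monomials with all exponents even (`x⁴`, `x²y²`, `x²z²`, `y⁴`,
`y²z²`, `z⁴`) is a free `ℤ`-module of rank 3, with basis the images of `x⁴`, `x²y²`,
`x²z²`. -/
theorem degree_four_even_monomials_in_RU :
    (Ideal.Quotient.mk IU (phiU (X 1 ^ 4)) =
        Ideal.Quotient.mk IU (phiU (X 0 ^ 2 * X 2 ^ 2)) ∧
      Ideal.Quotient.mk IU (phiU (X 0 ^ 2 * X 2 ^ 2)) =
        Ideal.Quotient.mk IU (phiU (X 1 ^ 2 * X 2 ^ 2)) ∧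
      Ideal.Quotient.mk IU (phiU (X 1 ^ 2 * X 2 ^ 2)) =
        Ideal.Quotient.mk IU (phiU (X 2 ^ 4))) ∧
    LinearIndependent ℤ
      ![Ideal.Quotient.mk IU (phiU (X 0 ^ 4)),
        Ideal.Quotient.mk IU (phiU (X 0 ^ 2 * X 1 ^ 2)),
        Ideal.Quotient.mk IU (phiU (X 0 ^ 2 * X 2 ^ 2))] ∧
    Submodule.span ℤ
        ({Ideal.Quotient.mk IU (phiU (X 0 ^ 4)),
          Ideal.Quotient.mk IU (phiU (X 0 ^ 2 * X 1 ^ 2)),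
          Ideal.Quotient.mk IU (phiU (X 0 ^ 2 * X 2 ^ 2)),
          Ideal.Quotient.mk IU (phiU (X 1 ^ 4)),
          Ideal.Quotient.mk IU (phiU (X 1 ^ 2 * X 2 ^ 2)),
          Ideal.Quotient.mk IU (phiU (X 2 ^ 4))} : Set (P3 ⧸ IU)) =
      Submodule.span ℤ
        ({Ideal.Quotient.mk IU (phiU (X 0 ^ 4)),
          Ideal.Quotient.mk IU (phiU (X 0 ^ 2 * X 1 ^ 2)),
          Ideal.Quotient.mk IU (phiU (X 0 ^ 2 * X 2 ^ 2))} : Set (P3 ⧸ IU)) := by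
  refine ⟨⟨mk_phiU_y4_eq_x2z2, mk_phiU_x2z2_eq_y2z2, mk_phiU_y2z2_eq_z4⟩,
    linearIndependent_mk_phiU_x4_x2y2_x2z2, ?_⟩
  rw [mk_phiU_y4_eq_x2z2, ← mk_phiU_y2z2_eq_z4, ← mk_phiU_x2z2_eq_y2z2]
  simp

end
end
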